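/- arXiv:2206.05372 — 2 statements merged into one kernel-verified Lean document; each statement's English description precedes it below -/
import Mathlib

section
/- Let E₂ be the elliptic curve over ℂ(t) given by y² = x³ + t² + t⁻². For complex numbers a, b, c, d, the pair (a, b·t + c + d·t⁻¹) is a ℂ(t)-rational point of E₂ if and only if c = 0, b ∈ {1, −1}, d ∈ {1, −1}, and a³ = 2·b·d; in particular a³ = 2 when b = d and a³ = −2 when b = −d, so there are exactly six such points. -/
/-- For the elliptic curve `E₂ : y² = x³ + t² + t⁻²` over `ℂ(t)` and complex
numbers `a, b, c, d`, the pair `(a, b·t + c + d·t⁻¹)` is a `ℂ(t)`-rational point of `E₂` if and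
only if `c = 0`, `b ∈ {1, -1}`, `d ∈ {1, -1}` and `a³ = 2·b·d`. -/
theorem stmt_1 (a b c d : ℂ) :
    (RatFunc.C b * RatFunc.X + RatFunc.C c + RatFunc.C d * (RatFunc.X)⁻¹) ^ 2
      = (RatFunc.C a) ^ 3 + RatFunc.X ^ 2 + (RatFunc.X ^ 2)⁻¹
    ↔ c = 0 ∧ (b = 1 ∨ b = -1) ∧ (d = 1 ∨ d = -1) ∧ a ^ 3 = 2 * b * d := by
  have hX : (RatFunc.X : RatFunc ℂ) ≠ 0 := RatFunc.X_ne_zero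
  have key : ((RatFunc.C b * RatFunc.X + RatFunc.C c + RatFunc.C d * (RatFunc.X)⁻¹) ^ 2
      = (RatFunc.C a) ^ 3 + RatFunc.X ^ 2 + (RatFunc.X ^ 2)⁻¹)
      ↔ ((Polynomial.C b * Polynomial.X ^ 2 + Polynomial.C c * Polynomial.X + Polynomial.C d) ^ 2
        = Polynomial.X ^ 4 + Polynomial.C (a ^ 3) * Polynomial.X ^ 2 + 1) := by
    rw [← (RatFunc.algebraMap_injective ℂ).eq_iff]
    push_cast [map_add, map_mul, map_pow, map_one, RatFunc.algebraMap_C, RatFunc.algebraMap_X]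
    constructor
    · intro h
      field_simp at h ⊢
      linear_combination h
    · intro h
      field_simp at h ⊢
      linear_combination h
  rw [key]
  constructor
  · intro h
    have h' : Polynomial.C (b ^ 2 - 1) * Polynomial.X ^ 4
        + Polynomial.C (2 * b * c) * Polynomial.X ^ 3
        + Polynomial.C (c ^ 2 + 2 * b * d - a ^ 3) * Polynomial.X ^ 2
        + Polynomial.C (2 * c * d) * Polynomial.X
        + Polynomial.C (d ^ 2 - 1) = 0 := by
      simp only [map_sub, map_add, map_mul, map_pow, map_one, map_ofNat]
      rw [map_pow] at h
      linear_combination h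
    have e4 := congrArg (fun p => Polynomial.coeff p 4) h'
    have e3 := congrArg (fun p => Polynomial.coeff p 3) h'
    have e2 := congrArg (fun p => Polynomial.coeff p 2) h'
    have e1 := congrArg (fun p => Polynomial.coeff p 1) h'
    have e0 := congrArg (fun p => Polynomial.coeff p 0) h'
    simp only [Polynomial.coeff_add, Polynomial.coeff_C_mul, Polynomial.coeff_X_pow,
      Polynomial.coeff_C, Polynomial.coeff_X, Polynomial.coeff_zero] at e4 e3 e2 e1 e0
    norm_num at e4 e3 e2 e1 e0
    have hb0 : b ≠ 0 := by
      intro hb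
      rw [hb] at e4
      norm_num at e4
    have hc : c = 0 := by
      rcases e3 with h' | h'
      · exact absurd h' hb0
      · exact h'
    have hb : b = 1 ∨ b = -1 := by
      have hfac : (b - 1) * (b + 1) = 0 := by linear_combination e4
      rcases mul_eq_zero.mp hfac with h' | h'
      · exact Or.inl (by linear_combination h')
      · exact Or.inr (by linear_combination h')
    have hd : d = 1 ∨ d = -1 := by
      have hfac : (d - 1) * (d + 1) = 0 := by linear_combination e0
      rcases mul_eq_zero.mp hfac with h' | h'
      · exact Or.inl (by linear_combination h')
      · exact Or.inr (by linear_combination h')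
    exact ⟨hc, hb, hd, by rw [hc] at e2; linear_combination -e2⟩
  · rintro ⟨rfl, hb, hd, ha⟩
    have hb2' : Polynomial.C b ^ 2 = (1 : Polynomial ℂ) := by
      rcases hb with rfl | rfl <;> norm_num
    have hd2' : Polynomial.C d ^ 2 = (1 : Polynomial ℂ) := by
      rcases hd with rfl | rfl <;> norm_num
    rw [ha]
    have hC : (Polynomial.C (2 * b * d) : Polynomial ℂ)
        = 2 * Polynomial.C b * Polynomial.C d := by
      simp only [map_mul, map_ofNat]
    rw [hC]
    simp only [map_zero]
    linear_combination Polynomial.X ^ 4 * hb2' + hd2'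
end

section
/- If complex numbers a, b, c, d satisfy the system 2c = a³, 3a²b = c² + 2d + 4, 3ab² = 2cd, d² = b³ + 2 (equivalently, if (a·s + b, s² + c·s + d) is a ℂ(s)-rational point of the elliptic curve y² = x³ + s⁴ − 4s² + 2 over ℂ(s)), then a is a root of the degree-27 polynomial a³·(a¹² − 352a⁶ − 128)·(a¹² − 32a⁶ + 3456). -/
/-- If complex numbers `a, b, c, d` satisfy `2c = a³`,
`3a²b = c² + 2d + 4`, `3ab² = 2cd` and `d² = b³ + 2` (equivalently, if
`(a·s + b, s² + c·s + d)` is a `ℂ(s)`-rational point of `y² = x³ + s⁴ − 4s² + 2`), then `a`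
is a root of the degree-27 polynomial `a³·(a¹² − 352a⁶ − 128)·(a¹² − 32a⁶ + 3456)`. -/
theorem stmt_11 (a b c d : ℂ)
    (h₁ : 2 * c = a ^ 3) (h₂ : 3 * a ^ 2 * b = c ^ 2 + 2 * d + 4)
    (h₃ : 3 * a * b ^ 2 = 2 * c * d) (h₄ : d ^ 2 = b ^ 3 + 2) :
    a ^ 3 * (a ^ 12 - 352 * a ^ 6 - 128) * (a ^ 12 - 32 * a ^ 6 + 3456) = 0 := by
  rcases eq_or_ne a 0 with ha | ha
  · rw [ha]; ring
  · have hd : 8 * d = 12 * a ^ 2 * b - a ^ 6 - 16 := by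
      linear_combination -4 * h₂ - (2 * c + a ^ 3) * h₁
    have hb2 : 3 * b ^ 2 = a ^ 2 * d := by
      have h : a * (3 * b ^ 2) = a * (a ^ 2 * d) := by
        linear_combination h₃ + d * h₁
      exact mul_left_cancel₀ ha h
    have e1 : 24 * b ^ 2 - 12 * a ^ 4 * b + a ^ 8 + 16 * a ^ 2 = 0 := by
      linear_combination 8 * hb2 + a ^ 2 * hd
    have e2 : (12 * a ^ 2 * b - a ^ 6 - 16) ^ 2 - 64 * b ^ 3 - 128 = 0 := by
      linear_combination 64 * h₄ - (12 * a ^ 2 * b - a ^ 6 - 16 + 8 * d) * hd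
    linear_combination
      a ^ 3 * ((370 * a ^ 16 - 256 * a ^ 10 - 114944 * a ^ 4) +
        (-5352 * a ^ 12 + 58368 * a ^ 6 - 9216) * b +
        (2496 * a ^ 8 - 24576 * a ^ 2) * b ^ 2) * e1 +
      a ^ 3 * ((-369 * a ^ 12 + 5760 * a ^ 6 - 3456) +
        (936 * a ^ 8 - 9216 * a ^ 2) * b) * e2
end
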